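/- arXiv:1001.4013 — 2 statements merged into one kernel-verified Lean document; each statement's English description precedes it below -/
import Mathlib

section
/- Let a < b be real numbers and let α > 0. The range of the left Liouville fractional integral operator I_{a+}^α acting on L²(a,b) is dense in L²(a,b), and likewise the range of the right Liouville fractional integral operator I_{b-}^α acting on L²(a,b) is dense in L²(a,b). -/
open MeasureTheory Set
open scoped NNReal ENNReal

/-- The left Liouville fractional integral of order `α` on `(a,·)`:
`(I_{a+}^α f)(t) = Γ(α)⁻¹ ∫_a^t (t-s)^(α-1) f(s) ds`. -/
noncomputable def leftFrac (a α : ℝ) (f : ℝ → ℝ) : ℝ → ℝ :=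
  fun t => (Real.Gamma α)⁻¹ * ∫ s in Ioo a t, (t - s) ^ (α - 1) * f s

/-- The right Liouville fractional integral of order `α` on `(·,b)`:
`(I_{b-}^α f)(t) = Γ(α)⁻¹ ∫_t^b (s-t)^(α-1) f(s) ds`. -/
noncomputable def rightFrac (b α : ℝ) (f : ℝ → ℝ) : ℝ → ℝ :=
  fun t => (Real.Gamma α)⁻¹ * ∫ s in Ioo t b, (s - t) ^ (α - 1) * f s

/-- Lebesgue measure restricted to the interval `(a,b)`, modelling `L²(a,b)`. -/
noncomputable def msr (a b : ℝ) : Measure ℝ := volume.restrict (Ioo a b)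


/-!
For continuous `f` the map `f ↦ I_{a+}^α f` is linear, and the Beta integral gives
`I_{a+}^α (s - a)^n = Γ(α)⁻¹ B(α, n + 1) (t - a)^(α + n)`. Hence it suffices that an `h ∈ L²(a,b)`
orthogonal to every `(t - a)^(α + n)` vanishes. The function `w = (t - a)^α h` is integrable with
vanishing moments `∫ (t - a)^n w`, so by Weierstrass approximation it integrates to zero against
every continuous function; thus `w = 0`, and `h = 0` a.e. The reflection `t ↦ a + b - t` is an
isometry of `L²(a,b)` conjugating `I_{b-}^α` to `I_{a+}^α`, which gives the right-sided case.
-/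

section Moments

variable {μ : Measure ℝ} {a b c : ℝ} {w : ℝ → ℝ}

lemma MeasureTheory.Integrable.continuous_mul_of_ae_mem_Icc (hμ : ∀ᵐ x ∂μ, x ∈ Icc a b)
    (hw : Integrable w μ) {g : ℝ → ℝ} (hg : Continuous g) : Integrable (fun x => g x * w x) μ := by
  obtain ⟨C, hC⟩ := isCompact_Icc.exists_bound_of_continuousOn hg.continuousOn
  exact hw.bdd_mul hg.aestronglyMeasurable (hμ.mono hC)

lemma integral_eval_sub_mul_eq_zero_of_moments (hμ : ∀ᵐ x ∂μ, x ∈ Icc a b)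
    (hw : Integrable w μ) (hmom : ∀ n : ℕ, ∫ x, (x - c) ^ n * w x ∂μ = 0) (q : Polynomial ℝ) :
    ∫ x, q.eval (x - c) * w x ∂μ = 0 := by
  simp_rw [Polynomial.eval_eq_sum_range, Finset.sum_mul, mul_assoc]
  rw [MeasureTheory.integral_finsetSum _ fun n _ =>
    (hw.continuous_mul_of_ae_mem_Icc hμ (by fun_prop)).const_mul _]
  exact Finset.sum_eq_zero fun n _ => by rw [integral_const_mul, hmom n, mul_zero]

lemma integral_continuous_mul_eq_zero_of_moments (hμ : ∀ᵐ x ∂μ, x ∈ Icc a b)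
    (hw : Integrable w μ) (hmom : ∀ n : ℕ, ∫ x, (x - c) ^ n * w x ∂μ = 0)
    {g : ℝ → ℝ} (hg : Continuous g) : ∫ x, g x * w x ∂μ = 0 := by
  set W := ∫ x, |w x| ∂μ
  have hW : 0 ≤ W := integral_nonneg fun x => abs_nonneg _
  suffices h : ∀ ε > 0, |∫ x, g x * w x ∂μ| ≤ 0 + ε from
    abs_nonpos_iff.1 (le_of_forall_pos_le_add h)
  intro ε hε
  set δ := ε / (W + 1)
  obtain ⟨q, hq⟩ := exists_polynomial_near_of_continuousOn (a - c) (b - c) (fun y => g (y + c))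
    (by fun_prop) δ (by positivity)
  have hclose : ∀ᵐ x ∂μ, ‖(g x - q.eval (x - c)) * w x‖ ≤ δ * |w x| := by
    filter_upwards [hμ] with x hx
    have := hq (x - c) ⟨by linarith [hx.1], by linarith [hx.2]⟩
    rw [sub_add_cancel, abs_sub_comm] at this
    rw [norm_mul, Real.norm_eq_abs]
    exact mul_le_mul_of_nonneg_right this.le (abs_nonneg _)
  calc |∫ x, g x * w x ∂μ|
      = ‖∫ x, (g x - q.eval (x - c)) * w x ∂μ‖ := by
        simp_rw [sub_mul]
        rw [integral_sub (hw.continuous_mul_of_ae_mem_Icc hμ hg)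
          (hw.continuous_mul_of_ae_mem_Icc hμ (by fun_prop)),
          integral_eval_sub_mul_eq_zero_of_moments hμ hw hmom, sub_zero, Real.norm_eq_abs]
    _ ≤ ∫ x, δ * |w x| ∂μ := norm_integral_le_of_norm_le (hw.abs.const_mul δ) hclose
    _ = δ * W := integral_const_mul δ _
    _ ≤ 0 + ε := by
        rw [zero_add, ← mul_div_right_comm, div_le_iff₀ (by positivity)]
        nlinarith

theorem ae_eq_zero_of_moments_eq_zero (hμ : ∀ᵐ x ∂μ, x ∈ Icc a b) (hw : Integrable w μ)
    (hmom : ∀ n : ℕ, ∫ x, (x - c) ^ n * w x ∂μ = 0) : w =ᵐ[μ] 0 :=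
  ae_eq_zero_of_integral_contDiff_smul_eq_zero hw.locallyIntegrable fun _ hg _ =>
    integral_continuous_mul_eq_zero_of_moments hμ hw hmom hg.continuous

end Moments

section IntervalL2

variable {a b : ℝ}

instance (a b : ℝ) : IsFiniteMeasure (msr a b) := by
  unfold msr
  infer_instance

lemma ae_mem_Ioo_msr : ∀ᵐ t ∂msr a b, t ∈ Ioo a b :=
  ae_restrict_mem measurableSet_Ioo

lemma Continuous.memLp_msr {f : ℝ → ℝ} (hf : Continuous f) (p : ℝ≥0∞) :
    MemLp f p (msr a b) := by
  obtain ⟨C, hC⟩ := isCompact_Icc.exists_bound_of_continuousOn hf.continuousOn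
  exact MemLp.of_bound hf.aestronglyMeasurable C
    (ae_mem_Ioo_msr.mono fun t ht => hC t (Ioo_subset_Icc_self ht))

lemma MeasureTheory.Lp.eq_zero_of_weighted_moments_eq_zero {ω : ℝ → ℝ} (hω : Continuous ω)
    (hω0 : ∀ t ∈ Ioo a b, ω t ≠ 0) (c : ℝ) (h : Lp ℝ 2 (msr a b))
    (hmom : ∀ n : ℕ, ∫ t, (t - c) ^ n * (ω t * h t) ∂msr a b = 0) : h = 0 := by
  have hIcc : ∀ᵐ t ∂msr a b, t ∈ Icc a b :=
    ae_mem_Ioo_msr.mono fun _ ht => Ioo_subset_Icc_self ht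
  have hωh : Integrable (fun t => ω t * h t) (msr a b) :=
    ((Lp.memLp h).integrable one_le_two).continuous_mul_of_ae_mem_Icc hIcc hω
  rw [Lp.eq_zero_iff_ae_eq_zero]
  filter_upwards [ae_eq_zero_of_moments_eq_zero hIcc hωh hmom, ae_mem_Ioo_msr] with t ht htab
  exact (mul_eq_zero.1 ht).resolve_left (hω0 t htab)

end IntervalL2

section LeftFrac

variable {a b α : ℝ}

/-- Euler's Beta function `B(α, n + 1)`. -/
noncomputable def betaNat (α : ℝ) (n : ℕ) : ℝ :=
  ∫ u in (0 : ℝ)..1, (1 - u) ^ (α - 1) * u ^ n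

lemma betaNat_pos (hα : 0 < α) (n : ℕ) : 0 < betaNat α n := by
  have hkernel : IntervalIntegrable (fun u : ℝ => (1 - u) ^ (α - 1)) volume 0 1 := by
    simpa using ((intervalIntegral.intervalIntegrable_rpow' (a := 0) (b := 1)
      (by linarith : -1 < α - 1)).comp_sub_left 1).symm
  refine intervalIntegral.intervalIntegral_pos_of_pos_on
    (hkernel.mul_continuousOn (continuousOn_pow n)) (fun u hu => ?_) one_pos
  exact mul_pos (Real.rpow_pos_of_pos (by linarith [hu.2]) _) (pow_pos hu.1 n)

lemma integral_Ioo_sub_rpow_mul_sub_pow (α : ℝ) (n : ℕ) {t : ℝ} (ht : a < t) :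
    ∫ s in Ioo a t, (t - s) ^ (α - 1) * (s - a) ^ n
      = betaNat α n * ((t - a) ^ α * (t - a) ^ n) := by
  set L := t - a
  have hL : 0 < L := sub_pos.2 ht
  have hsubst := intervalIntegral.integral_comp_mul_add
    (fun s => (t - s) ^ (α - 1) * (s - a) ^ n) hL.ne' a (a := 0) (b := 1)
  rw [mul_zero, zero_add, mul_one, sub_add_cancel] at hsubst
  have hscale : ∀ u ∈ uIcc (0 : ℝ) 1, (t - (L * u + a)) ^ (α - 1) * (L * u + a - a) ^ n
      = L ^ (α - 1) * L ^ n * ((1 - u) ^ (α - 1) * u ^ n) := by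
    intro u hu
    rw [uIcc_of_le zero_le_one] at hu
    rw [show t - (L * u + a) = L * (1 - u) by ring, add_sub_cancel_right,
      Real.mul_rpow hL.le (by linarith [hu.2]), mul_pow]
    ring
  rw [← integral_Ioc_eq_integral_Ioo, ← intervalIntegral.integral_of_le ht.le,
    ← smul_inv_smul₀ hL.ne' (∫ s in a..t, _), ← hsubst, intervalIntegral.integral_congr hscale,
    intervalIntegral.integral_const_mul, smul_eq_mul, betaNat,
    Real.rpow_sub_one hL.ne']
  field_simp

lemma integrableOn_Ioo_sub_rpow_mul (hα : 0 < α) {f : ℝ → ℝ} (hf : Continuous f) (t : ℝ) :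
    IntegrableOn (fun s => (t - s) ^ (α - 1) * f s) (Ioo a t) := by
  have hkernel : IntervalIntegrable (fun s : ℝ => (t - s) ^ (α - 1)) volume a t := by
    simpa using ((intervalIntegral.intervalIntegrable_rpow' (a := 0) (b := t - a)
      (by linarith : -1 < α - 1)).comp_sub_left t).symm
  refine (hkernel.def'.mono_set fun s hs => ?_).mul_continuousOn_of_subset hf.continuousOn
    measurableSet_Ioo isCompact_Icc Ioo_subset_Icc_self
  exact ⟨(min_le_left a t).trans_lt hs.1, hs.2.le.trans (le_max_right a t)⟩

lemma leftFrac_add (hα : 0 < α) {f g : ℝ → ℝ} (hf : Continuous f) (hg : Continuous g) :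
    leftFrac a α (f + g) = leftFrac a α f + leftFrac a α g := by
  ext t
  simp only [leftFrac, Pi.add_apply, mul_add]
  rw [integral_add (integrableOn_Ioo_sub_rpow_mul hα hf t)
    (integrableOn_Ioo_sub_rpow_mul hα hg t), mul_add]

lemma leftFrac_smul (r : ℝ) (f : ℝ → ℝ) : leftFrac a α (r • f) = r • leftFrac a α f := by
  ext t
  simp only [leftFrac, Pi.smul_apply, smul_eq_mul, mul_left_comm _ r, integral_const_mul]

lemma leftFrac_zero : leftFrac a α 0 = 0 := by
  simpa using leftFrac_smul (a := a) (α := α) 0 0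

lemma leftFrac_sub_pow (α : ℝ) (n : ℕ) {t : ℝ} (ht : a < t) :
    leftFrac a α (fun s => (s - a) ^ n) t
      = (Real.Gamma α)⁻¹ * betaNat α n * ((t - a) ^ α * (t - a) ^ n) := by
  rw [leftFrac, integral_Ioo_sub_rpow_mul_sub_pow α n ht, mul_assoc]

/-- Continuity of `f` makes the defining integrals exist, so that `leftFrac` is additive here. -/
noncomputable def leftFracContinuousImage (a b α : ℝ) (hα : 0 < α) :
    Submodule ℝ (Lp ℝ 2 (msr a b)) where
  carrier := {F | ∃ f : ℝ → ℝ, Continuous f ∧ ⇑F =ᵐ[msr a b] leftFrac a α f}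
  zero_mem' := ⟨0, continuous_const, by rw [leftFrac_zero]; exact Lp.coeFn_zero ℝ 2 _⟩
  add_mem' := by
    rintro F G ⟨f, hf, hF⟩ ⟨g, hg, hG⟩
    refine ⟨f + g, hf.add hg, ?_⟩
    rw [leftFrac_add hα hf hg]
    exact (Lp.coeFn_add F G).trans (hF.add hG)
  smul_mem' := by
    rintro r F ⟨f, hf, hF⟩
    refine ⟨r • f, hf.const_smul r, ?_⟩
    rw [leftFrac_smul]
    exact (Lp.coeFn_smul r F).trans (hF.const_smul r)

end LeftFrac

section Density

variable {a b α : ℝ}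

lemma exists_mem_leftFracContinuousImage_eq_rpow_mul_pow (hα : 0 < α) (n : ℕ) :
    ∃ G ∈ leftFracContinuousImage a b α hα,
      ⇑G =ᵐ[msr a b] fun t => (t - a) ^ α * (t - a) ^ n := by
  have hcont : Continuous fun t => (t - a) ^ α * (t - a) ^ n := by
    have := Real.continuous_rpow_const hα.le
    fun_prop
  refine ⟨(hcont.memLp_msr 2).toLp _,
    ⟨(Real.Gamma α * (betaNat α n)⁻¹) • fun s => (s - a) ^ n, by fun_prop, ?_⟩,
    MemLp.coeFn_toLp _⟩
  have hΓ := (Real.Gamma_pos_of_pos hα).ne'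
  have hB := (betaNat_pos hα n).ne'
  filter_upwards [MemLp.coeFn_toLp (hcont.memLp_msr 2), ae_mem_Ioo_msr] with t hG ht
  rw [hG, leftFrac_smul, Pi.smul_apply, leftFrac_sub_pow α n ht.1, smul_eq_mul]
  field_simp

theorem dense_setOf_ae_eq_leftFrac (hα : 0 < α) :
    Dense {F : Lp ℝ 2 (msr a b) |
      ∃ f : ℝ → ℝ, MemLp f 2 (msr a b) ∧ (F : ℝ → ℝ) =ᵐ[msr a b] leftFrac a α f} := by
  have hclosure : (leftFracContinuousImage a b α hα).topologicalClosure = ⊤ := by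
    rw [Submodule.topologicalClosure_eq_top_iff, Submodule.eq_bot_iff]
    intro h hh
    refine Lp.eq_zero_of_weighted_moments_eq_zero (Real.continuous_rpow_const hα.le |>.comp
      (continuous_sub_right a)) (fun t ht => (Real.rpow_pos_of_pos (sub_pos.2 ht.1) α).ne')
      a h fun n => ?_
    obtain ⟨G, hG, hGcoe⟩ := exists_mem_leftFracContinuousImage_eq_rpow_mul_pow hα n (b := b)
    rw [← (Submodule.mem_orthogonal _ h).1 hh G hG, L2.inner_def]
    refine integral_congr_ae ?_
    filter_upwards [hGcoe] with t hGt
    simp only [hGt, Function.comp_apply, RCLike.inner_apply, conj_trivial]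
    ring
  refine (Submodule.dense_iff_topologicalClosure_eq_top.2 hclosure).mono ?_
  rintro F ⟨f, hf, hF⟩
  exact ⟨f, hf.memLp_msr 2, hF⟩

end Density

section Reflection

variable {a b α : ℝ}

lemma measurePreserving_const_sub_msr (a b : ℝ) :
    MeasurePreserving (fun t => a + b - t) (msr a b) (msr a b) := by
  have := (Measure.measurePreserving_sub_left volume (a + b)).restrict_preimage_emb
    (MeasurableEquiv.subLeft (a + b)).measurableEmbedding (Ioo a b)
  rwa [preimage_const_sub_Ioo, add_sub_cancel_right, add_sub_cancel_left] at this

lemma rightFrac_eq_leftFrac_comp_const_sub (f : ℝ → ℝ) (t : ℝ) :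
    rightFrac b α f t = leftFrac a α (fun s => f (a + b - s)) (a + b - t) := by
  have := (Measure.measurePreserving_sub_left volume (a + b)).setIntegral_preimage_emb
    (MeasurableEquiv.subLeft (a + b)).measurableEmbedding
    (fun s => (s - t) ^ (α - 1) * f s) (Ioo t b)
  rw [preimage_const_sub_Ioo, add_sub_cancel_right] at this
  simp only [rightFrac, leftFrac, ← this, sub_right_comm (a + b) t]

theorem dense_setOf_ae_eq_rightFrac (hα : 0 < α) :
    Dense {F : Lp ℝ 2 (msr a b) |
      ∃ f : ℝ → ℝ, MemLp f 2 (msr a b) ∧ (F : ℝ → ℝ) =ᵐ[msr a b] rightFrac b α f} := by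
  have hσ := measurePreserving_const_sub_msr a b
  set J := Lp.compMeasurePreserving (E := ℝ) (p := 2) _ hσ
  have hJJ : ∀ F, J (J F) = F := fun F => by
    rw [← Lp.compMeasurePreserving_comp_apply]
    convert Lp.compMeasurePreserving_id_apply F
    ext t
    simp
  have hJ : Continuous J := (Lp.isometry_compMeasurePreserving hσ).continuous
  refine ((Function.Surjective.denseRange fun F => ⟨J F, hJJ F⟩).dense_image hJ
    (dense_setOf_ae_eq_leftFrac hα)).mono ?_
  rintro _ ⟨F, ⟨f, hf, hF⟩, rfl⟩
  refine ⟨fun s => f (a + b - s), hf.comp_measurePreserving hσ, ?_⟩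
  filter_upwards [Lp.coeFn_compMeasurePreserving F hσ, hσ.quasiMeasurePreserving.ae_eq_comp hF]
    with t hJt hFt
  rw [hJt, hFt, Function.comp_apply, rightFrac_eq_leftFrac_comp_const_sub (a := a)]
  simp

end Reflection

theorem fractional_integrals_dense_range_in_L2_general (a b α : ℝ) (hα : 0 < α) :
    Dense {F : Lp ℝ 2 (msr a b) |
      ∃ f : ℝ → ℝ, MemLp f 2 (msr a b) ∧
        (F : ℝ → ℝ) =ᵐ[msr a b] leftFrac a α f} ∧
    Dense {F : Lp ℝ 2 (msr a b) |
      ∃ f : ℝ → ℝ, MemLp f 2 (msr a b) ∧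
        (F : ℝ → ℝ) =ᵐ[msr a b] rightFrac b α f} :=
  ⟨dense_setOf_ae_eq_leftFrac hα, dense_setOf_ae_eq_rightFrac hα⟩

theorem fractional_integrals_dense_range_in_L2 (a b α : ℝ) (hab : a < b) (hα : 0 < α) :
    Dense {F : Lp ℝ 2 (msr a b) |
      ∃ f : ℝ → ℝ, MemLp f 2 (msr a b) ∧
        (F : ℝ → ℝ) =ᵐ[msr a b] leftFrac a α f} ∧
    Dense {F : Lp ℝ 2 (msr a b) |
      ∃ f : ℝ → ℝ, MemLp f 2 (msr a b) ∧
        (F : ℝ → ℝ) =ᵐ[msr a b] rightFrac b α f} :=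
  fractional_integrals_dense_range_in_L2_general a b α hα
end

section
/- Let a < b be real numbers and let 0 < α < 1/2. The linear span of the family of functions {g_y : a < y ≤ b}, where g_y(t) := Γ(1-α)^{-1} (y-t)^{-α} 1_{(a,y)}(t), is dense in L²(a,b). Equivalently, the linear span of the indicator functions 1_{[x,y)}, a ≤ x < y ≤ b, is dense in the space H^α(a,b) := I_{b-}^α(L²(a,b)) equipped with the norm ‖I_{b-}^α g‖_{H^α} := ‖g‖_{L²(a,b)}. -/
open MeasureTheory Set
open scoped NNReal ENNReal

/-- The function `g_y(t) = Γ(1-α)⁻¹ (y-t)^(-α) 1_{(a,y)}(t)`. -/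
noncomputable def gy (a α y : ℝ) : ℝ → ℝ :=
  fun t => (Real.Gamma (1 - α))⁻¹ * (Ioo a y).indicator (fun t => (y - t) ^ (-α)) t

/-! If `f ∈ L²(a,b)` is orthogonal to every `g_y`, then `I_{a+}^{1-α} f` vanishes on `(a,b]`,
because `⟪g_y, f⟫ = (I_{a+}^{1-α} f)(y)`. Integrating in `y` raises the order by one (Fubini and
`∫_t^w (z-t)^β dz = (w-t)^(β+1)/(β+1)`), so `I_{a+}^{n+1-α} f` vanishes at `b` for every `n`: all
moments of `(b-t)^(-α) f(t)` on `(a,b)` vanish. Since `α < 1/2`, the weight `(b-t)^(-α)` lies in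
`L²`, so `(b-t)^(-α) f` is integrable, and by Weierstrass approximation an integrable function with
vanishing moments is zero; hence `f = 0`. -/

section RpowIntegrals

variable {β : ℝ}

lemma integrableOn_Ioo_sub_rpow (hβ : -1 < β) {t w : ℝ} (htw : t ≤ w) :
    IntegrableOn (fun z => (z - t) ^ β) (Ioo t w) := by
  rw [← intervalIntegrable_iff_integrableOn_Ioo_of_le htw]
  simpa using (intervalIntegral.intervalIntegrable_rpow' hβ (a := 0) (b := w - t)).comp_sub_right t

lemma integral_Ioo_sub_rpow (hβ : -1 < β) {t w : ℝ} (htw : t ≤ w) :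
    ∫ z in Ioo t w, (z - t) ^ β = (w - t) ^ (β + 1) / (β + 1) := by
  rw [← integral_Ioc_eq_integral_Ioo, ← intervalIntegral.integral_of_le htw,
    intervalIntegral.integral_comp_sub_right (fun x => x ^ β), sub_self,
    integral_rpow (Or.inl hβ), Real.zero_rpow (by linarith), sub_zero]

lemma integrableOn_Ioo_rpow_sub (hβ : -1 < β) (a y : ℝ) :
    IntegrableOn (fun s => (y - s) ^ β) (Ioo a y) := by
  rcases le_total a y with hay | hya
  · rw [← intervalIntegrable_iff_integrableOn_Ioo_of_le hay]
    simpa using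
      ((intervalIntegral.intervalIntegrable_rpow' hβ (a := 0) (b := y - a)).comp_sub_left y).symm
  · simp [Ioo_eq_empty_of_le hya]

end RpowIntegrals

/-- `(z - t)₊^β f(t)`; the indicator is needed because `Real.rpow` does not vanish on negative
bases. -/
noncomputable def liouvilleKernel (β : ℝ) (f : ℝ → ℝ) (z t : ℝ) : ℝ :=
  (Ioi t).indicator (fun z => (z - t) ^ β * f t) z

namespace liouvilleKernel

variable {β a w : ℝ} {f : ℝ → ℝ}

lemma eq_indicator_Iio (z t : ℝ) :
    liouvilleKernel β f z t = (Iio z).indicator (fun t => (z - t) ^ β * f t) t := rfl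

lemma norm_eq (z t : ℝ) :
    ‖liouvilleKernel β f z t‖ = liouvilleKernel β (fun t => |f t|) z t := by
  by_cases hz : t < z
  · simp [liouvilleKernel, hz, abs_of_nonneg (Real.rpow_nonneg (sub_nonneg.2 hz.le) β)]
  · simp [liouvilleKernel, hz]

lemma integral_dt {z : ℝ} (hz : z ≤ w) :
    ∫ t in Ioo a w, liouvilleKernel β f z t = ∫ t in Ioo a z, (z - t) ^ β * f t := by
  simp_rw [eq_indicator_Iio]
  rw [integral_indicator measurableSet_Iio, Measure.restrict_restrict measurableSet_Iio,
    Iio_inter_Ioo, min_eq_left hz]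

lemma integral_dz (hβ : -1 < β) {t : ℝ} (ht : t ∈ Ioo a w) :
    ∫ z in Ioo a w, liouvilleKernel β f z t = (w - t) ^ (β + 1) / (β + 1) * f t := by
  simp only [liouvilleKernel]
  rw [integral_indicator measurableSet_Ioi,
    Measure.restrict_restrict measurableSet_Ioi, Ioi_inter_Ioo, max_eq_left ht.1.le,
    integral_mul_const, integral_Ioo_sub_rpow hβ ht.2.le]

lemma integrable (hβ : -1 < β) (hf : IntegrableOn f (Ioo a w)) :
    Integrable (Function.uncurry (liouvilleKernel β f))
      ((volume.restrict (Ioo a w)).prod (volume.restrict (Ioo a w))) := by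
  have hmeas : AEStronglyMeasurable (Function.uncurry (liouvilleKernel β f))
      ((volume.restrict (Ioo a w)).prod (volume.restrict (Ioo a w))) := by
    show AEStronglyMeasurable
      ({p : ℝ × ℝ | p.2 < p.1}.indicator fun p => (p.1 - p.2) ^ β * f p.2) _
    refine (AEStronglyMeasurable.mul ?_ hf.aestronglyMeasurable.comp_snd).indicator
      (measurableSet_lt measurable_snd measurable_fst)
    exact (by fun_prop : Measurable fun p : ℝ × ℝ => (p.1 - p.2) ^ β).aestronglyMeasurable
  refine (integrable_prod_iff' hmeas).2 ⟨?_, ?_⟩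
  · filter_upwards [ae_restrict_mem measurableSet_Ioo] with t ht
    simp only [Function.uncurry_apply_pair, liouvilleKernel]
    rw [integrable_indicator_iff measurableSet_Ioi, IntegrableOn,
      Measure.restrict_restrict measurableSet_Ioi, Ioi_inter_Ioo, max_eq_left ht.1.le]
    exact (integrableOn_Ioo_sub_rpow hβ ht.2.le).mul_const (f t)
  · have hcont : Continuous fun t => (w - t) ^ (β + 1) / (β + 1) :=
      ((continuous_const.sub continuous_id).rpow_const fun _ => Or.inr (by linarith)).div_const _
    refine (IntegrableOn.continuousOn_mul_of_subset hcont.continuousOn hf.norm isCompact_Icc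
      measurableSet_Ioo Ioo_subset_Icc_self).congr_fun (fun t ht => ?_) measurableSet_Ioo
    simp only [Function.uncurry_apply_pair, norm_eq]
    rw [integral_dz hβ ht, Real.norm_eq_abs]

end liouvilleKernel

theorem integral_Ioo_integral_Ioo_rpow_mul {β a w : ℝ} {f : ℝ → ℝ} (hβ : -1 < β)
    (hf : IntegrableOn f (Ioo a w)) :
    ∫ z in Ioo a w, ∫ t in Ioo a z, (z - t) ^ β * f t =
      (β + 1)⁻¹ * ∫ t in Ioo a w, (w - t) ^ (β + 1) * f t :=
  calc ∫ z in Ioo a w, ∫ t in Ioo a z, (z - t) ^ β * f t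
      = ∫ z in Ioo a w, ∫ t in Ioo a w, liouvilleKernel β f z t :=
        setIntegral_congr_fun measurableSet_Ioo fun z hz =>
          (liouvilleKernel.integral_dt hz.2.le).symm
    _ = ∫ t in Ioo a w, ∫ z in Ioo a w, liouvilleKernel β f z t :=
        integral_integral_swap (liouvilleKernel.integrable hβ hf)
    _ = ∫ t in Ioo a w, (β + 1)⁻¹ * ((w - t) ^ (β + 1) * f t) :=
        setIntegral_congr_fun measurableSet_Ioo fun t ht => by
          rw [liouvilleKernel.integral_dz hβ ht]; ring
    _ = (β + 1)⁻¹ * ∫ t in Ioo a w, (w - t) ^ (β + 1) * f t := integral_const_mul _ _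

theorem integral_leftFrac {a w γ : ℝ} {f : ℝ → ℝ} (hγ : 0 < γ) (hf : IntegrableOn f (Ioo a w)) :
    ∫ z in Ioo a w, leftFrac a γ f z = leftFrac a (γ + 1) f w := by
  have h := integral_Ioo_integral_Ioo_rpow_mul (β := γ - 1) (by linarith) hf
  rw [sub_add_cancel] at h
  simp only [leftFrac]
  rw [integral_const_mul, h, add_sub_cancel_right, Real.Gamma_add_one hγ.ne', mul_inv]
  ring

theorem leftFrac_add_natCast_eqOn_zero {a b γ : ℝ} {f : ℝ → ℝ} (hγ : 0 < γ)
    (hf : IntegrableOn f (Ioo a b)) (h : EqOn (leftFrac a γ f) 0 (Ioc a b)) (n : ℕ) :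
    EqOn (leftFrac a (γ + n) f) 0 (Ioc a b) := by
  induction n with
  | zero => simpa using h
  | succ n ih =>
    intro y hy
    rw [Nat.cast_succ, ← add_assoc, ← integral_leftFrac (by positivity)
      (hf.mono_set (Ioo_subset_Ioo_right hy.2))]
    exact setIntegral_eq_zero_of_forall_eq_zero fun z hz => ih ⟨hz.1, hz.2.le.trans hy.2⟩

lemma integral_rpow_mul_eq_zero_of_leftFrac_eq_zero {a γ y : ℝ} {f : ℝ → ℝ} (hγ : 0 < γ)
    (h : leftFrac a γ f y = 0) : ∫ s in Ioo a y, (y - s) ^ (γ - 1) * f s = 0 := by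
  simpa [leftFrac, (Real.Gamma_pos_of_pos hγ).ne'] using h

theorem setIntegral_mul_eq_zero_of_forall_polynomial {a b : ℝ} {g φ : ℝ → ℝ}
    (hg : IntegrableOn g (Ioo a b))
    (h : ∀ p : Polynomial ℝ, ∫ t in Ioo a b, p.eval t * g t = 0)
    (hφ : ContinuousOn φ (Icc a b)) :
    ∫ t in Ioo a b, φ t * g t = 0 := by
  refine abs_nonpos_iff.mp (le_of_forall_pos_le_add fun ε hε => ?_)
  set M := ∫ t in Ioo a b, |g t|
  have hM : 0 ≤ M := setIntegral_nonneg measurableSet_Ioo fun t _ => abs_nonneg _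
  obtain ⟨p, hp⟩ := exists_polynomial_near_of_continuousOn a b φ hφ (ε / (M + 1)) (by positivity)
  have hint (ψ : ℝ → ℝ) (hψ : ContinuousOn ψ (Icc a b)) :
      IntegrableOn (fun t => ψ t * g t) (Ioo a b) :=
    hg.continuousOn_mul_of_subset hψ isCompact_Icc measurableSet_Ioo Ioo_subset_Icc_self
  have hφp := hint _ (hφ.sub p.continuous.continuousOn)
  calc |∫ t in Ioo a b, φ t * g t|
      = |∫ t in Ioo a b, (φ t - p.eval t) * g t| := by
        simp_rw [sub_mul]
        rw [integral_sub (hint φ hφ) (hint _ p.continuous.continuousOn), h p, sub_zero]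
    _ ≤ ∫ t in Ioo a b, |(φ t - p.eval t) * g t| := abs_integral_le_integral_abs
    _ ≤ ∫ t in Ioo a b, ε / (M + 1) * |g t| := by
        refine setIntegral_mono_on hφp.abs (hg.abs.const_mul _) measurableSet_Ioo fun t ht => ?_
        rw [abs_mul, abs_sub_comm]
        exact mul_le_mul_of_nonneg_right (hp t (Ioo_subset_Icc_self ht)).le (abs_nonneg _)
    _ = ε / (M + 1) * M := integral_const_mul _ _
    _ ≤ 0 + ε := by
        rw [zero_add, div_mul_eq_mul_div, div_le_iff₀ (by positivity)]
        nlinarith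

theorem ae_eq_zero_of_forall_setIntegral_sub_pow_mul_eq_zero {a b c : ℝ} {g : ℝ → ℝ}
    (hg : IntegrableOn g (Ioo a b))
    (h : ∀ n : ℕ, ∫ t in Ioo a b, (c - t) ^ n * g t = 0) :
    ∀ᵐ t ∂volume.restrict (Ioo a b), g t = 0 := by
  have hpoly : ∀ p : Polynomial ℝ, ∫ t in Ioo a b, p.eval t * g t = 0 := by
    intro p
    set q := p.comp (Polynomial.C c - Polynomial.X)
    have hq : ∀ t, p.eval t * g t =
        ∑ i ∈ Finset.range (q.natDegree + 1), q.coeff i * ((c - t) ^ i * g t) := by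
      intro t
      rw [show p.eval t = q.eval (c - t) by simp [q], Polynomial.eval_eq_sum_range, Finset.sum_mul]
      simp_rw [mul_assoc]
    simp_rw [hq]
    rw [integral_finsetSum]
    · simp [integral_const_mul, h]
    · intro i _
      exact (hg.continuousOn_mul_of_subset (by fun_prop) isCompact_Icc measurableSet_Ioo
        Ioo_subset_Icc_self).const_mul _
  refine ae_eq_zero_of_integral_contDiff_smul_eq_zero hg.locallyIntegrable fun φ hφ _ => ?_
  exact setIntegral_mul_eq_zero_of_forall_polynomial hg hpoly hφ.continuous.continuousOn

instance isFiniteMeasure_msr (a b : ℝ) : IsFiniteMeasure (msr a b) := by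
  unfold msr; infer_instance

lemma msr_restrict_Ioo {a b y : ℝ} (hy : y ≤ b) :
    (msr a b).restrict (Ioo a y) = volume.restrict (Ioo a y) := by
  rw [msr, Measure.restrict_restrict measurableSet_Ioo,
    inter_eq_self_of_subset_left (Ioo_subset_Ioo_right hy)]

lemma memLp_indicator_rpow_sub {a b y r : ℝ} (hr : -1 / 2 < r) (hy : y ≤ b) :
    MemLp ((Ioo a y).indicator fun t => (y - t) ^ r) 2 (msr a b) := by
  have hmeas : Measurable ((Ioo a y).indicator fun t => (y - t) ^ r) :=
    (by fun_prop : Measurable fun t : ℝ => (y - t) ^ r).indicator measurableSet_Ioo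
  rw [memLp_two_iff_integrable_sq hmeas.aestronglyMeasurable]
  simp_rw [sq, ← indicator_mul]
  rw [integrable_indicator_iff measurableSet_Ioo, IntegrableOn, msr_restrict_Ioo hy]
  refine (integrableOn_Ioo_rpow_sub (β := 2 * r) (by linarith) a y).congr_fun
    (fun t ht => ?_) measurableSet_Ioo
  simp only [two_mul, Real.rpow_add (sub_pos.2 ht.2)]

lemma memLp_gy {a b α y : ℝ} (hα : α < 1 / 2) (hy : y ≤ b) : MemLp (gy a α y) 2 (msr a b) :=
  (memLp_indicator_rpow_sub (by linarith) hy).const_mul _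

lemma inner_eq_leftFrac_of_ae_eq_gy {a b α y : ℝ} {F : Lp ℝ 2 (msr a b)} (f : Lp ℝ 2 (msr a b))
    (hy : y ≤ b) (hF : F =ᵐ[msr a b] gy a α y) :
    inner ℝ F f = leftFrac a (1 - α) f y := by
  calc inner ℝ F f = ∫ t, gy a α y t * f t ∂msr a b := by
        rw [L2.inner_def]
        refine integral_congr_ae ?_
        filter_upwards [hF] with t ht
        simp [ht, mul_comm]
    _ = (Real.Gamma (1 - α))⁻¹ * ∫ t in Ioo a y, (y - t) ^ (-α) * f t := by
        simp only [gy, mul_assoc, ← indicator_mul_left]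
        rw [integral_const_mul, integral_indicator measurableSet_Ioo, msr_restrict_Ioo hy]
    _ = leftFrac a (1 - α) f y := by rw [leftFrac, sub_sub_cancel_left]

lemma integrableOn_rpow_sub_mul_of_memLp {a b α : ℝ} (hα : α < 1 / 2) {f : ℝ → ℝ}
    (hf : MemLp f 2 (msr a b)) : IntegrableOn (fun t => (b - t) ^ (-α) * f t) (Ioo a b) := by
  refine ((memLp_indicator_rpow_sub (a := a) (r := -α) (by linarith) le_rfl).integrable_mul
    hf).congr ?_
  filter_upwards [ae_restrict_mem measurableSet_Ioo] with t ht
  simp [indicator_of_mem ht]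

theorem span_gy_dense_in_L2_general (a b α : ℝ) (hab : a < b) (hα' : α < 1/2) :
    Dense ((Submodule.span ℝ
      {F : Lp ℝ 2 (msr a b) | ∃ y : ℝ, a < y ∧ y ≤ b ∧
        (F : ℝ → ℝ) =ᵐ[msr a b] gy a α y} : Submodule ℝ (Lp ℝ 2 (msr a b))) :
      Set (Lp ℝ 2 (msr a b))) := by
  rw [Submodule.dense_iff_topologicalClosure_eq_top, Submodule.topologicalClosure_eq_top_iff,
    Submodule.eq_bot_iff]
  intro f hf
  have hγ : 0 < 1 - α := by linarith
  have hfi : IntegrableOn f (Ioo a b) := (Lp.memLp f).integrable one_le_two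
  have hvanish : EqOn (leftFrac a (1 - α) f) 0 (Ioc a b) := fun y hy => by
    have hG := memLp_gy (a := a) hα' hy.2
    rw [Pi.zero_apply, ← inner_eq_leftFrac_of_ae_eq_gy f hy.2 hG.coeFn_toLp]
    exact (Submodule.mem_orthogonal _ f).1 hf _
      (Submodule.subset_span ⟨y, hy.1, hy.2, hG.coeFn_toLp⟩)
  have hmom (n : ℕ) : ∫ t in Ioo a b, (b - t) ^ n * ((b - t) ^ (-α) * f t) = 0 := by
    rw [← integral_rpow_mul_eq_zero_of_leftFrac_eq_zero (by positivity)
      (leftFrac_add_natCast_eqOn_zero hγ hfi hvanish n ⟨hab, le_rfl⟩)]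
    refine setIntegral_congr_fun measurableSet_Ioo fun t ht => ?_
    rw [← mul_assoc, ← Real.rpow_natCast, ← Real.rpow_add (sub_pos.2 ht.2)]
    ring_nf
  have hzero := ae_eq_zero_of_forall_setIntegral_sub_pow_mul_eq_zero
    (integrableOn_rpow_sub_mul_of_memLp hα' (Lp.memLp f)) hmom
  refine Lp.eq_zero_iff_ae_eq_zero.mpr ?_
  filter_upwards [hzero, ae_restrict_mem measurableSet_Ioo] with t ht htab
  exact (mul_eq_zero.mp ht).resolve_left (Real.rpow_pos_of_pos (sub_pos.2 htab.2) _).ne'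

theorem span_gy_dense_in_L2 (a b α : ℝ) (hab : a < b) (hα : 0 < α) (hα' : α < 1/2) :
    Dense ((Submodule.span ℝ
      {F : Lp ℝ 2 (msr a b) | ∃ y : ℝ, a < y ∧ y ≤ b ∧
        (F : ℝ → ℝ) =ᵐ[msr a b] gy a α y} : Submodule ℝ (Lp ℝ 2 (msr a b))) :
      Set (Lp ℝ 2 (msr a b))) :=
  span_gy_dense_in_L2_general a b α hab hα'
end
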